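/- There is a family of OTIMAPP instances with n agents in which, for every feasible solution, the number of distinct fragments starting from a fixed vertex u is at least 2^n − 1; hence any algorithm that stores all fragments requires Ω(2^n) space in the worst case. -/

import Mathlib

open scoped Classical

/-- An OTIMAPP path set: `n` agents, agent `i` follows the path
`loc i 0, loc i 1, ..., loc i (L i)`; `loc i 0` is its start and `loc i (L i)` its goal. -/
structure OTI (V : Type) (n : ℕ) where
  L : Fin n → ℕ
  loc : Fin n → ℕ → V

namespace OTI

variable {V : Type} {n : ℕ}

/-- Activation of agent `i` in configuration `c` (clocks): the agent advances iff it is not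
at the end of its path and its next vertex is unoccupied. -/
noncomputable def step (P : OTI V n) (c : Fin n → ℕ) (i : Fin n) : Fin n → ℕ :=
  if c i < P.L i ∧ ∀ j, j ≠ i → P.loc j (c j) ≠ P.loc i (c i + 1)
  then Function.update c i (c i + 1) else c

/-- Configuration after the first `k` activations of execution `e`. -/
noncomputable def run (P : OTI V n) (e : ℕ → Fin n) : ℕ → Fin n → ℕ
  | 0 => fun _ => 0
  | k + 1 => P.step (P.run e k) (e k)

/-- An execution is fair when every agent is activated infinitely often. -/
def Fair (e : ℕ → Fin n) : Prop := ∀ (i : Fin n) (k : ℕ), ∃ m, k ≤ m ∧ e m = i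

/-- All agents reach their goals after finitely many activations. -/
def Terminates (P : OTI V n) (e : ℕ → Fin n) : Prop :=
  ∃ k, ∀ i, P.run e k i = P.L i

/-- A feasible OTIMAPP solution: every fair execution terminates. -/
def Feasible (P : OTI V n) : Prop := ∀ e, Fair e → P.Terminates e

/-- A configuration (assignment of clocks) is reachable by some execution. -/
def Reachable (P : OTI V n) (c : Fin n → ℕ) : Prop := ∃ e k, P.run e k = c

/-- A potential cyclic deadlock: distinct agents `σ 0, …, σ k` with clock values `t`
such that each agent's next vertex is the next agent's current vertex, cyclically. -/
def PotentialCyclic (P : OTI V n) {k : ℕ} (σ : Fin (k + 1) → Fin n)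
    (t : Fin (k + 1) → ℕ) : Prop :=
  Function.Injective σ ∧ (∀ m, t m < P.L (σ m)) ∧
    ∀ m, P.loc (σ m) (t m + 1) = P.loc (σ (m + 1)) (t (m + 1))

/-- A reachable cyclic deadlock: a potential cyclic deadlock whose clock values are realized
by some reachable configuration. -/
def ReachableCyclic (P : OTI V n) {k : ℕ} (σ : Fin (k + 1) → Fin n)
    (t : Fin (k + 1) → ℕ) : Prop :=
  P.PotentialCyclic σ t ∧ ∃ c, P.Reachable c ∧ ∀ m, c (σ m) = t m

/-- A potential terminal deadlock `(i, j, tj)`: agent `i`'s goal lies on `j`'s path. -/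
def PotentialTerminal (P : OTI V n) (i j : Fin n) (tj : ℕ) : Prop :=
  i ≠ j ∧ tj ≤ P.L j ∧ P.loc i (P.L i) = P.loc j tj

/-- A reachable terminal deadlock: some execution puts `i` at its goal and `j` at clock `tj - 1`. -/
def ReachableTerminal (P : OTI V n) (i j : Fin n) (tj : ℕ) : Prop :=
  P.PotentialTerminal i j tj ∧ ∃ c, P.Reachable c ∧ c i = P.L i ∧ c j + 1 = tj

/-- The path set is a set of paths on graph `G` with starts `s` and goals `g`. -/
def OnGraph (P : OTI V n) (G : SimpleGraph V) (s g : Fin n → V) : Prop :=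
  (∀ i, P.loc i 0 = s i) ∧ (∀ i, P.loc i (P.L i) = g i) ∧
    ∀ i t, t < P.L i → G.Adj (P.loc i t) (P.loc i (t + 1))

/-- A fragment: a nonempty chain of (agent, clock) pairs with distinct agents, where each
agent's next vertex equals the next agent's current vertex. -/
def IsFragment (P : OTI V n) (l : List (Fin n × ℕ)) : Prop :=
  l ≠ [] ∧ (l.map Prod.fst).Nodup ∧ (∀ p ∈ l, p.2 < P.L p.1) ∧
    l.Chain' fun p q => P.loc p.1 (p.2 + 1) = P.loc q.1 q.2

/-- The vertex a fragment starts from. -/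
def fragStart (P : OTI V n) (l : List (Fin n × ℕ)) : Option V :=
  l.head?.map fun p => P.loc p.1 p.2

/-- The vertex a fragment ends at. -/
def fragEnd (P : OTI V n) (l : List (Fin n × ℕ)) : Option V :=
  l.getLast?.map fun p => P.loc p.1 (p.2 + 1)

end OTI

/-!
Every path from the start `i < n` to the goal `2n + 1 + i` in `corridorGraph n` crosses each
corridor edge `(n + m, n + m + 1)`, say at clock `T i m`. For any nonempty set of agents
`a₀, …, a_{k-1}` the pairs `(a_j, T a_j j)` therefore form a fragment starting from `n`, and the
set can be read off the fragment. The canonical solution is feasible because the unfinished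
agent with the largest clock can always move, so a fair execution keeps lowering the number of
outstanding moves until it is zero.
-/

lemma List.finite_length_le_of_forall_mem {α : Type*} {s : Set α} (hs : s.Finite) (k : ℕ) :
    {l : List α | l.length ≤ k ∧ ∀ x ∈ l, x ∈ s}.Finite := by
  have := hs.to_subtype
  refine ((List.finite_length_le s k).image (List.map Subtype.val)).subset ?_
  rintro l ⟨hlen, hl⟩
  lift l to List s using hl
  exact ⟨l, by simpa using hlen, rfl⟩

lemma Nat.exists_lt_le_succ_of_lt_of_le {α : Type*} [LinearOrder α] {f : ℕ → α} {a : α} {L : ℕ}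
    (h0 : f 0 < a) (hL : a ≤ f L) : ∃ t < L, f t < a ∧ a ≤ f (t + 1) := by
  induction L with
  | zero => exact absurd hL h0.not_ge
  | succ L ih =>
    by_cases h : a ≤ f L
    · obtain ⟨t, ht, hft⟩ := ih h
      exact ⟨t, by omega, hft⟩
    · exact ⟨L, by omega, not_le.mp h, hL⟩

namespace OTI

variable {V : Type} {n : ℕ} (P : OTI V n)

def CanMove (c : Fin n → ℕ) (i : Fin n) : Prop :=
  c i < P.L i ∧ ∀ j, j ≠ i → P.loc j (c j) ≠ P.loc i (c i + 1)

variable {P} {c : Fin n → ℕ} {i : Fin n}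

lemma step_of_canMove (h : P.CanMove c i) : P.step c i = Function.update c i (c i + 1) :=
  if_pos h

lemma step_of_not_canMove (h : ¬ P.CanMove c i) : P.step c i = c :=
  if_neg h

lemma step_le_L (hc : ∀ j, c j ≤ P.L j) (j : Fin n) : P.step c i j ≤ P.L j := by
  by_cases h : P.CanMove c i
  · rw [step_of_canMove h, Function.update_apply]
    split_ifs with hji
    · subst hji; exact h.1
    · exact hc j
  · rw [step_of_not_canMove h]; exact hc j

lemma run_le_L (e : ℕ → Fin n) (k : ℕ) (j : Fin n) : P.run e k j ≤ P.L j := by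
  induction k generalizing j with
  | zero => exact Nat.zero_le _
  | succ k ih => exact step_le_L ih j

variable (P) in
def remaining (c : Fin n → ℕ) : ℕ := ∑ j, (P.L j - c j)

lemma remaining_step_lt (h : P.CanMove c i) : P.remaining (P.step c i) < P.remaining c := by
  rw [step_of_canMove h]
  refine Finset.sum_lt_sum (fun j _ => ?_) ⟨i, Finset.mem_univ _, ?_⟩
  · rw [Function.update_apply]
    split_ifs with hji
    · subst hji; omega
    · exact le_rfl
  · rw [Function.update_self]
    have := h.1
    omega

lemma exists_remaining_run_lt {e : ℕ → Fin n} (hfair : Fair e) {k : ℕ}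
    (hmove : P.CanMove (P.run e k) i) : ∃ m, P.remaining (P.run e m) < P.remaining (P.run e k) := by
  obtain ⟨m, hkm, rfl⟩ := hfair i k
  by_contra! hge
  -- Until some activation succeeds the configuration is frozen, so agent `e m` can still move.
  have hfrozen : ∀ m', k ≤ m' → P.run e m' = P.run e k := by
    intro m' hm'
    induction m', hm' using Nat.le_induction with
    | base => rfl
    | succ m' _ ih =>
      have hstuck : ¬ P.CanMove (P.run e m') (e m') := fun hmv =>
        (hge (m' + 1)).not_gt (ih ▸ remaining_step_lt hmv)
      exact (step_of_not_canMove hstuck).trans ih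
  have hmove' : P.CanMove (P.run e m) (e m) := (hfrozen m hkm).symm ▸ hmove
  exact (hge (m + 1)).not_gt ((hfrozen m hkm) ▸ remaining_step_lt hmove')

theorem feasible_of_exists_canMove
    (h : ∀ c, (∀ j, c j ≤ P.L j) → (∃ j, c j < P.L j) → ∃ i, P.CanMove c i) : P.Feasible := by
  intro e hfair
  suffices ∀ r k, P.remaining (P.run e k) = r → P.Terminates e from this _ 0 rfl
  intro r
  induction r using Nat.strong_induction_on with
  | _ r ih =>
    intro k hk
    by_contra hterm
    obtain ⟨j, hj⟩ : ∃ j, P.run e k j ≠ P.L j := by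
      by_contra! hdone
      exact hterm ⟨k, hdone⟩
    obtain ⟨i, hi⟩ := h _ (run_le_L e k) ⟨j, (run_le_L e k j).lt_of_ne hj⟩
    obtain ⟨m, hm⟩ := exists_remaining_run_lt hfair hi
    exact hterm (ih _ (hk ▸ hm) m rfl)

variable (P) in
def TraversesEdge (i : Fin n) (x y : V) : Prop :=
  ∃ t < P.L i, P.loc i t = x ∧ P.loc i (t + 1) = y

/-- Agents `l` queued along a path, the `k`-th of them at position `m + k`, where agent `i`
occupies position `m'` at clock `T i m'`. -/
def queue (T : Fin n → ℕ → ℕ) : ℕ → List (Fin n) → List (Fin n × ℕ)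
  | _, [] => []
  | m, i :: l => (i, T i m) :: queue T (m + 1) l

lemma map_fst_queue (T : Fin n → ℕ → ℕ) (m : ℕ) (l : List (Fin n)) :
    (queue T m l).map Prod.fst = l := by
  induction l generalizing m with
  | nil => rfl
  | cons i l ih => simp [queue, ih]

section Queue

variable {v : ℕ → V} {N : ℕ} {T : Fin n → ℕ → ℕ}
  (hT : ∀ i, ∀ m < N, T i m < P.L i ∧ P.loc i (T i m) = v m ∧ P.loc i (T i m + 1) = v (m + 1))
include hT

lemma lt_L_of_mem_queue {m : ℕ} {l : List (Fin n)} (hlen : m + l.length ≤ N) :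
    ∀ p ∈ queue T m l, p.2 < P.L p.1 := by
  induction l generalizing m with
  | nil => simp [queue]
  | cons i l ih =>
    simp only [queue, List.mem_cons, forall_eq_or_imp, List.length_cons] at hlen ⊢
    exact ⟨(hT i m (by omega)).1, ih (by omega)⟩

lemma isChain_queue {m : ℕ} {l : List (Fin n)} (hlen : m + l.length ≤ N) :
    (queue T m l).IsChain fun p q => P.loc p.1 (p.2 + 1) = P.loc q.1 q.2 := by
  induction l generalizing m with
  | nil => exact List.isChain_nil
  | cons i l ih =>
    simp only [List.length_cons] at hlen
    refine List.isChain_cons.mpr ⟨?_, ih (by omega)⟩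
    cases l with
    | nil => simp [queue]
    | cons j l =>
      simp only [List.length_cons] at hlen
      simp only [queue, List.head?_cons, Option.mem_def, Option.some.injEq, forall_eq']
      rw [(hT i m (by omega)).2.2, (hT j (m + 1) (by omega)).2.1]

lemma isFragment_queue {m : ℕ} {l : List (Fin n)} (hl : l ≠ []) (hnd : l.Nodup)
    (hlen : m + l.length ≤ N) :
    P.IsFragment (queue T m l) ∧ P.fragStart (queue T m l) = some (v m) := by
  obtain ⟨i, l, rfl⟩ := List.exists_cons_of_ne_nil hl
  refine ⟨⟨by simp [queue], (map_fst_queue T m _).symm ▸ hnd, lt_L_of_mem_queue hT hlen,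
    isChain_queue hT hlen⟩, ?_⟩
  simp only [List.length_cons] at hlen
  simp [queue, fragStart, (hT i m (by omega)).2.1]

end Queue

lemma finite_setOf_isFragment : {l | P.IsFragment l}.Finite := by
  have hclock : {p : Fin n × ℕ | p.2 < P.L p.1}.Finite :=
    (Set.finite_univ.prod (Set.finite_Iio (∑ i, P.L i))).subset fun p hp =>
      ⟨trivial, hp.trans_le (Finset.single_le_sum (fun i _ => Nat.zero_le (P.L i))
        (Finset.mem_univ p.1))⟩
  refine (List.finite_length_le_of_forall_mem hclock n).subset fun l hl => ⟨?_, hl.2.2.1⟩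
  simpa using hl.2.1.length_le_card

theorem two_pow_sub_one_le_ncard_isFragment {v : ℕ → V}
    (hv : ∀ i, ∀ m < n, P.TraversesEdge i (v m) (v (m + 1))) :
    2 ^ n - 1 ≤ {l | P.IsFragment l ∧ P.fragStart l = some (v 0)}.ncard := by
  choose! T hT using hv
  have hcard : ((Finset.univ : Finset (Finset (Fin n))).erase ∅).card = 2 ^ n - 1 := by
    simp [Finset.card_erase_of_mem]
  rw [← hcard, ← Set.ncard_coe_finset]
  refine Set.ncard_le_ncard_of_injOn (fun S => queue T 0 S.toList) (fun S hS => ?_) ?_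
    (finite_setOf_isFragment.subset fun l hl => hl.1)
  · exact isFragment_queue hT (by simpa using hS) S.nodup_toList (by simpa using S.card_le_univ)
  · intro S _ S' _ h
    simpa [map_fst_queue] using congrArg (fun l => (l.map Prod.fst).toFinset) h

end OTI

/-- Starts `0, …, n - 1` are attached to `n`, the corridor `n — n + 1 — ⋯ — 2n` follows, and the
goals `2n + 1, …, 3n` are attached to `2n`. -/
def corridorGraph (n : ℕ) : SimpleGraph ℕ :=
  SimpleGraph.fromRel fun a b =>
    (a < n ∧ b = n) ∨ (n ≤ a ∧ a < 2 * n ∧ b = a + 1) ∨ (a = 2 * n ∧ 2 * n < b ∧ b ≤ 3 * n)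

def corridorLoc (n : ℕ) (i : Fin n) (t : ℕ) : ℕ :=
  if t = 0 then i else if t ≤ n + 1 then n + t - 1 else 2 * n + 1 + i

def corridorPaths (n : ℕ) : OTI ℕ n := ⟨fun _ => n + 2, corridorLoc n⟩

variable {n : ℕ}

lemma corridorPaths_onGraph :
    (corridorPaths n).OnGraph (corridorGraph n) (fun i => i) (fun i => 2 * n + 1 + i) := by
  refine ⟨fun i => rfl, fun i => ?_, fun i t ht => ?_⟩
  · simp [corridorPaths, corridorLoc]
  · have := i.isLt
    simp only [corridorPaths, corridorGraph, corridorLoc, SimpleGraph.fromRel_adj,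
      Nat.add_one_ne_zero, if_false] at ht ⊢
    split_ifs <;> omega

lemma corridorPaths_exists_canMove (c : Fin n → ℕ) (hc : ∃ j, c j < n + 2) :
    ∃ i, (corridorPaths n).CanMove c i := by
  obtain ⟨i, hi, hmax⟩ := Finset.exists_max_image {j | c j < n + 2} c
    (by simpa [Finset.filter_nonempty_iff] using hc)
  simp only [Finset.mem_filter, Finset.mem_univ, true_and] at hi hmax
  refine ⟨i, hi, fun j hji hloc => hji (Fin.ext ?_)⟩
  have := i.isLt
  have := j.isLt
  have := hmax j
  simp only [corridorPaths, corridorLoc] at hloc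
  split_ifs at hloc <;> omega

lemma corridorPaths_feasible : (corridorPaths n).Feasible :=
  OTI.feasible_of_exists_canMove fun c _ hc => corridorPaths_exists_canMove c hc

lemma corridorGraph_adj_across {m x y : ℕ} (h : (corridorGraph n).Adj x y) (hm : m < n)
    (hx : x < n + m + 1) (hy : n + m + 1 ≤ y) : x = n + m ∧ y = n + m + 1 := by
  simp only [corridorGraph, SimpleGraph.fromRel_adj] at h
  omega

lemma OTI.traversesEdge_of_onGraph_corridorGraph {P : OTI ℕ n}
    (hP : P.OnGraph (corridorGraph n) (fun i => i) (fun i => 2 * n + 1 + i)) (i : Fin n)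
    {m : ℕ} (hm : m < n) : P.TraversesEdge i (n + m) (n + m + 1) := by
  obtain ⟨hs, hg, hadj⟩ := hP
  have := i.isLt
  obtain ⟨t, ht, hlt, hle⟩ := Nat.exists_lt_le_succ_of_lt_of_le (f := P.loc i)
    (a := n + m + 1) (L := P.L i) (by simp only [hs]; omega) (by simp only [hg]; omega)
  exact ⟨t, ht, corridorGraph_adj_across (hadj i t ht) hm hlt hle⟩

/-- there is a family of OTIMAPP instances with `n` agents in which, for every
feasible solution, the number of distinct fragments starting from a fixed vertex `u` is at
least `2 ^ n - 1`; hence storing all fragments requires `Ω(2 ^ n)` space. -/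
theorem fragments_exponential_lower_bound :
    ∀ n : ℕ, ∃ (G : SimpleGraph ℕ) (s g : Fin n → ℕ) (u : ℕ),
      Function.Injective s ∧ Function.Injective g ∧
      (∃ P : OTI ℕ n, P.OnGraph G s g ∧ P.Feasible) ∧
      ∀ P : OTI ℕ n, P.OnGraph G s g → P.Feasible →
        2 ^ n - 1 ≤
          {l : List (Fin n × ℕ) | P.IsFragment l ∧ P.fragStart l = some u}.ncard := by
  intro n
  refine ⟨corridorGraph n, fun i => i, fun i => 2 * n + 1 + i, n, Fin.val_injective,
    fun i j h => Fin.ext (by simpa using h), ⟨corridorPaths n, corridorPaths_onGraph,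
    corridorPaths_feasible⟩, fun P hP _ => ?_⟩
  exact P.two_pow_sub_one_le_ncard_isFragment (v := (n + ·)) fun i _ hm =>
    P.traversesEdge_of_onGraph_corridorGraph hP i hm
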